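/- arXiv:2501.06213 — 3 statements merged into one kernel-verified Lean document; each statement's English description precedes it below -/
import Mathlib

section
/- The map π_P, sending a sequence of positive integers (i_k)_{k≥1} to π_P((i_k)) = p̂_{i_1} + ∑_{k=1}^∞ p̂_{i_{k+1}} · p_{i_1} ⋯ p_{i_k}, is a bijection from the set of all sequences of positive integers onto the half-open interval [0,1). -/
open scoped BigOperators
open MeasureTheory

/-- `p̂_j = p_1 + ⋯ + p_{j-1}` (so `p̂_1 = 0`). -/
noncomputable def phat (p : ℕ → ℝ) (j : ℕ) : ℝ := ∑ m ∈ Finset.Ico 1 j, p m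

/-- The expansion `π_P((i_k)) = p̂_{i_1} + ∑_{k≥1} p̂_{i_{k+1}} · p_{i_1} ⋯ p_{i_k}`,
with the digit sequence `i : ℕ → ℕ` indexed from 0 (so `i 0 = i_1`). -/
noncomputable def piP (p : ℕ → ℝ) (i : ℕ → ℕ) : ℝ :=
  phat p (i 0) + ∑' k : ℕ, phat p (i (k + 1)) * ∏ m ∈ Finset.range (k + 1), p (i m)

/-- The value `∑_{k≥1} (−1)^{k−1} 2^{1−(i_1+⋯+i_k)}` of the Minkowski type function
on the point with digit sequence `i` (indexed from 0). -/
noncomputable def Mseq (i : ℕ → ℕ) : ℝ :=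
  ∑' k : ℕ, (-1 : ℝ) ^ k * (2 : ℝ) ^ ((1 : ℤ) - ∑ m ∈ Finset.range (k + 1), (i m : ℤ))

/-!
The intervals `[p̂_j, p̂_{j+1})`, `j ≥ 1`, partition `[0, 1)`, and `π_P` satisfies
`π_P(i) = p̂_{i_1} + p_{i_1} · π_P(i_2, i_3, …)` with `π_P(i_2, i_3, …) ∈ [0, 1)`, so `π_P(i)` lies in
the `i_1`-st interval. The inverse is the greedy expansion: read off the interval `j` containing `x`,
rescale `x ↦ (x - p̂_j) / p_j` back to `[0, 1)` and repeat. Extracting digits from `π_P(i)` returns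
`i`, and `π_P` of the digits of `x` is `x` because each rescaling shrinks the error by the factor
`p_j ≤ max(p_1, 1 - p_1) < 1`.
-/

namespace LurothSeries

open Finset Set Filter Topology

variable {p : ℕ → ℝ} {i : ℕ → ℕ} {x : ℝ}

lemma phat_one : phat p 1 = 0 := by simp [phat]

lemma phat_succ {j : ℕ} (hj : 1 ≤ j) : phat p (j + 1) = phat p j + p j :=
  sum_Ico_succ_top hj _

lemma phat_succ_eq_sum_range (j : ℕ) : phat p (j + 1) = ∑ m ∈ range j, p (m + 1) := by
  simp [phat, sum_Ico_eq_sum_range, add_comm]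

lemma phat_nonneg (hpos : ∀ j, 1 ≤ j → 0 < p j) (j : ℕ) : 0 ≤ phat p j :=
  sum_nonneg fun m hm => (hpos m (mem_Ico.1 hm).1).le

lemma phat_mono (hpos : ∀ j, 1 ≤ j → 0 < p j) : Monotone (phat p) := fun _ _ h =>
  sum_le_sum_of_subset_of_nonneg (Ico_subset_Ico le_rfl h)
    fun m hm _ => (hpos m (mem_Ico.1 hm).1).le

lemma phat_le_one (hpos : ∀ j, 1 ≤ j → 0 < p j) (hP : HasSum (fun j => p (j + 1)) 1) (j : ℕ) :
    phat p j ≤ 1 := by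
  refine (phat_mono hpos j.le_succ).trans ?_
  rw [phat_succ_eq_sum_range]
  exact sum_le_hasSum _ (fun m _ => (hpos (m + 1) m.succ_pos).le) hP

lemma phat_succ_lt_one (hpos : ∀ j, 1 ≤ j → 0 < p j) (hP : HasSum (fun j => p (j + 1)) 1)
    (j : ℕ) : phat p (j + 1) < 1 := by
  have h := phat_le_one hpos hP (j + 2)
  rw [phat_succ (by omega)] at h
  linarith [hpos (j + 1) (by omega)]

lemma p_le_max (hpos : ∀ j, 1 ≤ j → 0 < p j) (hP : HasSum (fun j => p (j + 1)) 1) {j : ℕ}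
    (hj : 1 ≤ j) : p j ≤ max (p 1) (1 - p 1) := by
  obtain rfl | hj2 := hj.eq_or_lt
  · exact le_max_left _ _
  · have h1 : p 1 ≤ phat p j := by
      simpa [phat_succ le_rfl, phat_one] using phat_mono hpos hj2
    have h2 := phat_le_one hpos hP (j + 1)
    rw [phat_succ hj] at h2
    exact le_max_of_le_right (by linarith)

lemma max_lt_one (hpos : ∀ j, 1 ≤ j → 0 < p j) (hP : HasSum (fun j => p (j + 1)) 1) :
    max (p 1) (1 - p 1) < 1 := by
  have h := phat_succ_lt_one hpos hP 1
  rw [phat_succ le_rfl, phat_one] at h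
  exact max_lt (by linarith) (by linarith [hpos 1 le_rfl])

lemma sum_phat_mul_prod_add_prod_le_one (hpos : ∀ j, 1 ≤ j → 0 < p j)
    (hP : HasSum (fun j => p (j + 1)) 1) (hi : ∀ k, 1 ≤ i k) (n : ℕ) :
    ∑ k ∈ range n, phat p (i k) * ∏ m ∈ range k, p (i m) + ∏ m ∈ range n, p (i m) ≤ 1 := by
  induction n with
  | zero => simp
  | succ n ih =>
    -- the left side changes by `∏ m ∈ range n, p (i m) * (p̂_{i n + 1} - 1) ≤ 0`
    have hprod : 0 ≤ ∏ m ∈ range n, p (i m) := prod_nonneg fun m _ => (hpos _ (hi m)).le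
    have hstep := phat_le_one hpos hP (i n + 1)
    rw [phat_succ (hi n)] at hstep
    rw [sum_range_succ, prod_range_succ]
    nlinarith

lemma phat_mul_prod_nonneg (hpos : ∀ j, 1 ≤ j → 0 < p j) (hi : ∀ k, 1 ≤ i k) (k : ℕ) :
    0 ≤ phat p (i k) * ∏ m ∈ range k, p (i m) :=
  mul_nonneg (phat_nonneg hpos _) (prod_nonneg fun m _ => (hpos _ (hi m)).le)

lemma sum_phat_mul_prod_le_one (hpos : ∀ j, 1 ≤ j → 0 < p j)
    (hP : HasSum (fun j => p (j + 1)) 1) (hi : ∀ k, 1 ≤ i k) (n : ℕ) :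
    ∑ k ∈ range n, phat p (i k) * ∏ m ∈ range k, p (i m) ≤ 1 := by
  linarith [sum_phat_mul_prod_add_prod_le_one hpos hP hi n,
    prod_nonneg fun m (_ : m ∈ range n) => (hpos _ (hi m)).le]

lemma summable_phat_mul_prod (hpos : ∀ j, 1 ≤ j → 0 < p j) (hP : HasSum (fun j => p (j + 1)) 1)
    (hi : ∀ k, 1 ≤ i k) : Summable fun k => phat p (i k) * ∏ m ∈ range k, p (i m) :=
  summable_of_sum_range_le (phat_mul_prod_nonneg hpos hi) (sum_phat_mul_prod_le_one hpos hP hi)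

lemma piP_eq_tsum (hpos : ∀ j, 1 ≤ j → 0 < p j) (hP : HasSum (fun j => p (j + 1)) 1)
    (hi : ∀ k, 1 ≤ i k) : piP p i = ∑' k, phat p (i k) * ∏ m ∈ range k, p (i m) := by
  rw [(summable_phat_mul_prod hpos hP hi).tsum_eq_zero_add, piP]
  simp

lemma piP_cons (hpos : ∀ j, 1 ≤ j → 0 < p j) (hP : HasSum (fun j => p (j + 1)) 1)
    (hi : ∀ k, 1 ≤ i k) : piP p i = phat p (i 0) + p (i 0) * piP p (fun k => i (k + 1)) := by
  rw [piP, piP_eq_tsum hpos hP fun k => hi (k + 1), ← tsum_mul_left]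
  congr 1
  refine tsum_congr fun k => ?_
  rw [prod_range_succ']
  ring

lemma piP_le_one (hpos : ∀ j, 1 ≤ j → 0 < p j) (hP : HasSum (fun j => p (j + 1)) 1)
    (hi : ∀ k, 1 ≤ i k) : piP p i ≤ 1 := by
  rw [piP_eq_tsum hpos hP hi]
  exact Real.tsum_le_of_sum_range_le (phat_mul_prod_nonneg hpos hi)
    (sum_phat_mul_prod_le_one hpos hP hi)

lemma piP_nonneg (hpos : ∀ j, 1 ≤ j → 0 < p j) (hP : HasSum (fun j => p (j + 1)) 1)
    (hi : ∀ k, 1 ≤ i k) : 0 ≤ piP p i := by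
  rw [piP_eq_tsum hpos hP hi]
  exact tsum_nonneg (phat_mul_prod_nonneg hpos hi)

lemma piP_lt_one (hpos : ∀ j, 1 ≤ j → 0 < p j) (hP : HasSum (fun j => p (j + 1)) 1)
    (hi : ∀ k, 1 ≤ i k) : piP p i < 1 := by
  have htail := piP_le_one hpos hP fun k => hi (k + 1)
  have hlt := phat_succ_lt_one hpos hP (i 0)
  rw [phat_succ (hi 0)] at hlt
  rw [piP_cons hpos hP hi]
  nlinarith [hpos _ (hi 0)]

lemma piP_mem_Ico_phat (hpos : ∀ j, 1 ≤ j → 0 < p j) (hP : HasSum (fun j => p (j + 1)) 1)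
    (hi : ∀ k, 1 ≤ i k) : piP p i ∈ Ico (phat p (i 0)) (phat p (i 0 + 1)) := by
  have h0 := piP_nonneg hpos hP fun k => hi (k + 1)
  have h1 := piP_lt_one hpos hP fun k => hi (k + 1)
  have hp0 := hpos _ (hi 0)
  rw [piP_cons hpos hP hi, phat_succ (hi 0)]
  constructor <;> nlinarith

/-- The index `j ≥ 1` of the interval `[p̂_j, p̂_{j+1})` containing `x ∈ [0, 1)`. -/
noncomputable def digit (p : ℕ → ℝ) (x : ℝ) : ℕ := sInf {j | x < phat p (j + 1)}

noncomputable def remainder (p : ℕ → ℝ) (x : ℝ) : ℝ :=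
  (x - phat p (digit p x)) / p (digit p x)

noncomputable def digits (p : ℕ → ℝ) (x : ℝ) (k : ℕ) : ℕ := digit p ((remainder p)^[k] x)

lemma digit_eq (hpos : ∀ j, 1 ≤ j → 0 < p j) {j : ℕ}
    (hx : x ∈ Ico (phat p j) (phat p (j + 1))) : digit p x = j := by
  refine le_antisymm (Nat.sInf_le hx.2) (not_lt.1 fun hlt => ?_)
  have hmem : x < phat p (digit p x + 1) := Nat.sInf_mem (s := {j | x < phat p (j + 1)}) ⟨j, hx.2⟩
  linarith [hx.1, phat_mono hpos (Nat.succ_le_of_lt hlt)]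

lemma digit_spec (hP : HasSum (fun j => p (j + 1)) 1) (hx : x ∈ Ico (0 : ℝ) 1) :
    1 ≤ digit p x ∧ x ∈ Ico (phat p (digit p x)) (phat p (digit p x + 1)) := by
  have hne : {j | x < phat p (j + 1)}.Nonempty := by
    have hlim : Tendsto (fun j => phat p (j + 1)) atTop (𝓝 1) := by
      simpa only [phat_succ_eq_sum_range] using hP.tendsto_sum_nat
    exact (hlim.eventually (eventually_gt_nhds hx.2)).exists
  have hlt : x < phat p (digit p x + 1) := Nat.sInf_mem hne
  obtain ⟨d, hd⟩ : ∃ d, digit p x = d + 1 := by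
    refine Nat.exists_eq_succ_of_ne_zero fun h0 => ?_
    rw [h0, zero_add, phat_one] at hlt
    exact hlt.not_ge hx.1
  have hle : ¬ x < phat p (d + 1) := Nat.notMem_of_lt_sInf (show d < digit p x by omega)
  rw [hd] at hlt ⊢
  exact ⟨by omega, not_lt.1 hle, hlt⟩

lemma phat_add_mul_remainder (hpos : ∀ j, 1 ≤ j → 0 < p j) (hP : HasSum (fun j => p (j + 1)) 1)
    (hx : x ∈ Ico (0 : ℝ) 1) : phat p (digit p x) + p (digit p x) * remainder p x = x := by
  have := (hpos _ (digit_spec hP hx).1).ne'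
  rw [remainder]
  field_simp
  ring

lemma mapsTo_remainder (hpos : ∀ j, 1 ≤ j → 0 < p j) (hP : HasSum (fun j => p (j + 1)) 1) :
    MapsTo (remainder p) (Ico 0 1) (Ico 0 1) := fun x hx => by
  obtain ⟨hd, hlo, hhi⟩ := digit_spec hP hx
  have hpd := hpos _ hd
  rw [phat_succ hd] at hhi
  exact ⟨div_nonneg (by linarith) hpd.le, (div_lt_one hpd).2 (by linarith)⟩

lemma digits_pos (hpos : ∀ j, 1 ≤ j → 0 < p j) (hP : HasSum (fun j => p (j + 1)) 1)
    (hx : x ∈ Ico (0 : ℝ) 1) (k : ℕ) : 1 ≤ digits p x k :=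
  (digit_spec hP ((mapsTo_remainder hpos hP).iterate k hx)).1

lemma digits_piP (hpos : ∀ j, 1 ≤ j → 0 < p j) (hP : HasSum (fun j => p (j + 1)) 1)
    (hi : ∀ k, 1 ≤ i k) : digits p (piP p i) = i := by
  funext k
  induction k generalizing i with
  | zero => exact digit_eq hpos (piP_mem_Ico_phat hpos hP hi)
  | succ k ih =>
    have hrem : remainder p (piP p i) = piP p (fun k => i (k + 1)) := by
      have := (hpos _ (hi 0)).ne'
      rw [remainder, digit_eq hpos (piP_mem_Ico_phat hpos hP hi), piP_cons hpos hP hi]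
      field_simp
      ring
    change digits p (remainder p (piP p i)) k = i (k + 1)
    rw [hrem, ih fun k => hi (k + 1)]

lemma abs_piP_digits_sub_le (hpos : ∀ j, 1 ≤ j → 0 < p j) (hP : HasSum (fun j => p (j + 1)) 1)
    (n : ℕ) : ∀ x ∈ Ico (0 : ℝ) 1, |piP p (digits p x) - x| ≤ max (p 1) (1 - p 1) ^ n := by
  induction n with
  | zero =>
    intro x hx
    have h0 := piP_nonneg hpos hP (digits_pos hpos hP hx)
    have h1 := piP_lt_one hpos hP (digits_pos hpos hP hx)
    rw [pow_zero, abs_le]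
    constructor <;> linarith [hx.1, hx.2]
  | succ n ih =>
    intro x hx
    have hd := (digit_spec hP hx).1
    have hcons : piP p (digits p x) - x
        = p (digit p x) * (piP p (digits p (remainder p x)) - remainder p x) := by
      rw [piP_cons hpos hP (digits_pos hpos hP hx)]
      change phat p (digit p x) + p (digit p x) * piP p (digits p (remainder p x)) - x = _
      linear_combination phat_add_mul_remainder hpos hP hx
    rw [hcons, abs_mul, abs_of_pos (hpos _ hd), pow_succ']
    exact mul_le_mul (p_le_max hpos hP hd) (ih _ (mapsTo_remainder hpos hP hx))
      (abs_nonneg _) ((hpos _ hd).le.trans (p_le_max hpos hP hd))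

lemma piP_digits (hpos : ∀ j, 1 ≤ j → 0 < p j) (hP : HasSum (fun j => p (j + 1)) 1)
    (hx : x ∈ Ico (0 : ℝ) 1) : piP p (digits p x) = x := by
  have hc := max_lt_one hpos hP
  have hc0 : 0 ≤ max (p 1) (1 - p 1) := le_max_of_le_left (hpos 1 le_rfl).le
  have h := ge_of_tendsto' (tendsto_pow_atTop_nhds_zero_of_lt_one hc0 hc)
    fun n => abs_piP_digits_sub_le hpos hP n x hx
  linarith [abs_nonpos_iff.1 h]

end LurothSeries

open LurothSeries in
/-- The map `π_P` is a bijection from the set of sequences of positive integers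
onto `[0, 1)`. -/
theorem stmt1 (p : ℕ → ℝ) (hp : ∀ j, 1 ≤ j → 0 < p j ∧ p j < 1)
    (hpsum : ∑' j : ℕ, p (j + 1) = 1) :
    Set.BijOn (piP p) {i : ℕ → ℕ | ∀ k, 1 ≤ i k} (Set.Ico (0 : ℝ) 1) := by
  have hpos : ∀ j, 1 ≤ j → 0 < p j := fun j hj => (hp j hj).1
  have hP : HasSum (fun j => p (j + 1)) 1 := by
    by_cases hs : Summable fun j => p (j + 1)
    · exact hpsum ▸ hs.hasSum
    · simp [tsum_eq_zero_of_not_summable hs] at hpsum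
  exact Set.InvOn.bijOn ⟨fun i hi => digits_piP hpos hP hi, fun x hx => piP_digits hpos hP hx⟩
    (fun i hi => ⟨piP_nonneg hpos hP hi, piP_lt_one hpos hP hi⟩)
    (fun x hx => digits_pos hpos hP hx)
end

section
/- For fixed positive integers c_1, …, c_n, the cylinder set Λ^π_{c_1 c_2 … c_n} = { π_P((i_k)) : i_1 = c_1, …, i_n = c_n } is exactly the half-open interval [ π_P(c_1,…,c_{n-1},c_n,1,1,1,…), π_P(c_1,…,c_{n-1},c_n+1,1,1,1,…) ), and its Lebesgue measure equals p_{c_1} p_{c_2} ⋯ p_{c_n}. -/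
open scoped BigOperators
open MeasureTheory

/-- The digit sequence `c_1, …, c_{n-1}, c_n, 1, 1, 1, …`. -/
def cylLow (c : ℕ → ℕ) (n : ℕ) : ℕ → ℕ := fun k => if k < n then c k else 1

/-- The digit sequence `c_1, …, c_{n-1}, c_n + 1, 1, 1, 1, …`. -/
def cylHigh (c : ℕ → ℕ) (n : ℕ) : ℕ → ℕ :=
  fun k => if k + 1 < n then c k else if k + 1 = n then c k + 1 else 1

/-! `π_P` is the coding map of the iterated function system `f_j x = p̂_j + p_j x`, whose
branches map `[0, 1)` onto the consecutive blocks `[p̂_j, p̂_{j+1})` of a partition of `[0, 1)`,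
and `π_P(i) = f_{i_1}(π_P(i_2, i_3, …))`. Greedy digits show that `π_P` maps the digit sequences
onto `[0, 1)`; the uniform bound `p_j ≤ 1 - min(p_1, p_2) < 1` makes the greedy expansion
of `x` converge to `x`. Hence the cylinder with prefix `c_1 … c_n` is the image of `[0, 1)` under the affine map
`f_{c_1} ∘ ⋯ ∘ f_{c_n}` of slope `p_{c_1} ⋯ p_{c_n}`, whose values at `0` and `1` are `π_P` of the
two sequences `c_1, …, c_n, 1, 1, …` and `c_1, …, c_n + 1, 1, 1, …`. -/

open Finset Filter Topology

/-- The masses are `p 1, p 2, …`; the value `p 0` plays no role. -/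
structure IsPNatDistribution (p : ℕ → ℝ) : Prop where
  pos : ∀ j, 1 ≤ j → 0 < p j
  hasSum : HasSum (fun j => p (j + 1)) 1

section

variable {p : ℕ → ℝ}

lemma phat_one : phat p 1 = 0 := by simp [phat]

lemma phat_succ {j : ℕ} (hj : 1 ≤ j) : phat p (j + 1) = phat p j + p j :=
  sum_Ico_succ_top hj p

lemma phat_succ_eq_sum_range (j : ℕ) : phat p (j + 1) = ∑ k ∈ range j, p (k + 1) := by
  rw [phat, sum_Ico_eq_sum_range, Nat.add_sub_cancel]
  simp only [add_comm]

lemma phat_nonneg (hpos : ∀ j, 1 ≤ j → 0 < p j) (j : ℕ) : 0 ≤ phat p j :=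
  sum_nonneg fun m hm => (hpos m (mem_Ico.1 hm).1).le

lemma le_phat (hpos : ∀ j, 1 ≤ j → 0 < p j) {a b : ℕ} (ha : 1 ≤ a) (hab : a < b) :
    p a ≤ phat p b :=
  single_le_sum (fun m hm => (hpos m (mem_Ico.1 hm).1).le) (mem_Ico.2 ⟨ha, hab⟩)

lemma phat_le_one (hP : IsPNatDistribution p) (j : ℕ) : phat p j ≤ 1 := by
  cases j with
  | zero => simp [phat]
  | succ j =>
    rw [phat_succ_eq_sum_range]
    exact sum_le_hasSum _ (fun m _ => (hP.pos (m + 1) m.succ_pos).le) hP.hasSum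

lemma phat_add_le_one (hP : IsPNatDistribution p) {j : ℕ} (hj : 1 ≤ j) : phat p j + p j ≤ 1 :=
  phat_succ hj ▸ phat_le_one hP (j + 1)

lemma phat_lt_one (hP : IsPNatDistribution p) {j : ℕ} (hj : 1 ≤ j) : phat p j < 1 := by
  linarith [phat_add_le_one hP hj, hP.pos j hj]

lemma exists_phat_le_lt (hsum : HasSum (fun j => p (j + 1)) 1) {x : ℝ} (hx0 : 0 ≤ x)
    (hx1 : x < 1) :
    ∃ j, 1 ≤ j ∧ phat p j ≤ x ∧ x < phat p (j + 1) := by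
  classical
  have hex : ∃ m, x < phat p (m + 1) := by
    obtain ⟨m, hm⟩ := (hsum.tendsto_sum_nat.eventually (lt_mem_nhds hx1)).exists
    exact ⟨m, by rwa [phat_succ_eq_sum_range]⟩
  obtain ⟨j, hj⟩ : ∃ j, Nat.find hex = j + 1 := by
    refine Nat.exists_eq_add_one.2 (Nat.pos_of_ne_zero fun h0 => ?_)
    have := Nat.find_spec hex
    rw [h0, phat_one] at this
    linarith
  refine ⟨j + 1, j.succ_pos, not_lt.1 (Nat.find_min hex (by omega)), hj ▸ Nat.find_spec hex⟩

lemma exists_forall_le_lt_one (hP : IsPNatDistribution p) :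
    ∃ r, 0 ≤ r ∧ r < 1 ∧ ∀ j, 1 ≤ j → p j ≤ r := by
  have h12 : p 1 + p 2 ≤ 1 :=
    (add_le_add_left (le_phat hP.pos le_rfl one_lt_two) _).trans (phat_add_le_one hP one_le_two)
  refine ⟨1 - min (p 1) (p 2), ?_, ?_, fun j hj => ?_⟩
  · linarith [min_le_left (p 1) (p 2), hP.pos 2 one_le_two]
  · linarith [lt_min (hP.pos 1 le_rfl) (hP.pos 2 one_le_two)]
  · rcases hj.eq_or_lt with rfl | hj
    · linarith [min_le_right (p 1) (p 2)]
    · have := (add_le_add_left (le_phat hP.pos le_rfl hj) _).trans (phat_add_le_one hP hj.le)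
      linarith [min_le_left (p 1) (p 2)]

noncomputable def ifsMap (p : ℕ → ℝ) (j : ℕ) (x : ℝ) : ℝ := phat p j + p j * x

noncomputable def ifsComp (p : ℕ → ℝ) (c : ℕ → ℕ) : ℕ → ℝ → ℝ
  | 0 => id
  | n + 1 => ifsComp p c n ∘ ifsMap p (c n)

lemma ifsComp_eq_mul_add (c : ℕ → ℕ) (n : ℕ) (x : ℝ) :
    ifsComp p c n x = (∏ m ∈ range n, p (c m)) * x + ifsComp p c n 0 := by
  induction n generalizing x with
  | zero => simp [ifsComp]
  | succ n ih =>
    simp only [ifsComp, Function.comp_apply, ifsMap, prod_range_succ]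
    rw [ih, ih (phat p (c n) + _)]
    ring

lemma ifsComp_congr {c d : ℕ → ℕ} {n : ℕ} (h : ∀ k, k < n → c k = d k) :
    ifsComp p c n = ifsComp p d n := by
  induction n with
  | zero => rfl
  | succ n ih =>
    simp only [ifsComp, h n n.lt_succ_self, ih fun k hk => h k (hk.trans n.lt_succ_self)]

lemma ifsComp_image_Ico {c : ℕ → ℕ} {n : ℕ} (hc : 0 < ∏ m ∈ range n, p (c m)) :
    ifsComp p c n '' Set.Ico 0 1 = Set.Ico (ifsComp p c n 0) (ifsComp p c n 1) := by
  rw [funext (ifsComp_eq_mul_add c n), Set.image_affine_Ico hc]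

lemma prod_digits_nonneg (hpos : ∀ j, 1 ≤ j → 0 < p j) {i : ℕ → ℕ} (hi : ∀ k, 1 ≤ i k)
    (n : ℕ) : 0 ≤ ∏ m ∈ range n, p (i m) :=
  prod_nonneg fun m _ => (hpos _ (hi m)).le

lemma piP_term_nonneg (hpos : ∀ j, 1 ≤ j → 0 < p j) {i : ℕ → ℕ} (hi : ∀ k, 1 ≤ i k)
    (k : ℕ) : 0 ≤ phat p (i (k + 1)) * ∏ m ∈ range (k + 1), p (i m) :=
  mul_nonneg (phat_nonneg hpos _) (prod_digits_nonneg hpos hi _)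

/-- The partial sums telescope: `p̂_j ≤ 1 - p_j` bounds the `k`-th term by
`∏_{m ≤ k} p_{i_m} - ∏_{m ≤ k+1} p_{i_m}`. -/
lemma sum_range_piP_le (hP : IsPNatDistribution p) {i : ℕ → ℕ} (hi : ∀ k, 1 ≤ i k) (K : ℕ) :
    ∑ k ∈ range K, phat p (i (k + 1)) * ∏ m ∈ range (k + 1), p (i m) ≤ p (i 0) := by
  calc ∑ k ∈ range K, phat p (i (k + 1)) * ∏ m ∈ range (k + 1), p (i m)
      ≤ ∑ k ∈ range K, (∏ m ∈ range (k + 1), p (i m) - ∏ m ∈ range (k + 1 + 1), p (i m)) := by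
        refine sum_le_sum fun k _ => ?_
        rw [prod_range_succ _ (k + 1), ← mul_one_sub, mul_comm (phat p _)]
        have := phat_add_le_one hP (hi (k + 1))
        exact mul_le_mul_of_nonneg_left (by linarith) (prod_digits_nonneg hP.pos hi _)
    _ = p (i 0) - ∏ m ∈ range (K + 1), p (i m) := by
        rw [sum_range_sub' (fun k => ∏ m ∈ range (k + 1), p (i m))]
        simp
    _ ≤ p (i 0) := sub_le_self _ (prod_digits_nonneg hP.pos hi _)

lemma summable_piP (hP : IsPNatDistribution p) {i : ℕ → ℕ} (hi : ∀ k, 1 ≤ i k) :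
    Summable fun k => phat p (i (k + 1)) * ∏ m ∈ range (k + 1), p (i m) :=
  summable_of_sum_range_le (piP_term_nonneg hP.pos hi) (sum_range_piP_le hP hi)

lemma piP_mem_Ico (hP : IsPNatDistribution p) {i : ℕ → ℕ} (hi : ∀ k, 1 ≤ i k) :
    piP p i ∈ Set.Ico 0 1 := by
  have htsum : ∑' k, phat p (i (k + 1)) * ∏ m ∈ range (k + 1), p (i m) ≤ p (i 0) :=
    Real.tsum_le_of_sum_range_le (piP_term_nonneg hP.pos hi) (sum_range_piP_le hP hi)
  have hnonneg : 0 ≤ ∑' k, phat p (i (k + 1)) * ∏ m ∈ range (k + 1), p (i m) :=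
    tsum_nonneg (piP_term_nonneg hP.pos hi)
  have hlt : phat p (i 0) + p (i 0) < 1 :=
    phat_succ (hi 0) ▸ phat_lt_one hP (Nat.le_add_left 1 _)
  rw [piP]
  exact ⟨by linarith [phat_nonneg hP.pos (i 0)], by linarith⟩

lemma piP_eq_ifsMap (hP : IsPNatDistribution p) {i : ℕ → ℕ} (hi : ∀ k, 1 ≤ i k) :
    piP p i = ifsMap p (i 0) (piP p fun k => i (k + 1)) := by
  rw [piP, piP, ifsMap, (summable_piP hP hi).tsum_eq_zero_add, mul_add, ← tsum_mul_left]
  simp only [prod_range_succ' _ (_ + 1), zero_add, prod_range_one]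
  ring_nf

lemma piP_eq_ifsComp (hP : IsPNatDistribution p) {i : ℕ → ℕ} (hi : ∀ k, 1 ≤ i k) (n : ℕ) :
    piP p i = ifsComp p i n (piP p fun k => i (k + n)) := by
  induction n with
  | zero => rfl
  | succ n ih =>
    rw [ih, piP_eq_ifsMap hP fun k => hi (k + n)]
    simp only [ifsComp, Function.comp_apply, zero_add, add_right_comm _ 1 n, add_assoc]

lemma piP_eq_phat_of_forall_succ_eq_one {i : ℕ → ℕ} (hi : ∀ k, i (k + 1) = 1) :
    piP p i = phat p (i 0) := by
  simp [piP, hi, phat_one]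

lemma tendsto_prod_range_zero (hP : IsPNatDistribution p) {i : ℕ → ℕ} (hi : ∀ k, 1 ≤ i k) :
    Tendsto (fun n => ∏ m ∈ range n, p (i m)) atTop (𝓝 0) := by
  obtain ⟨r, hr0, hr1, hpr⟩ := exists_forall_le_lt_one hP
  refine squeeze_zero (prod_digits_nonneg hP.pos hi) (fun n => ?_)
    (tendsto_pow_atTop_nhds_zero_of_lt_one hr0 hr1)
  simpa using prod_le_prod (s := range n) (fun m _ => (hP.pos _ (hi m)).le)
    fun m _ => hpr _ (hi m)

lemma exists_ifsMap_eq (hP : IsPNatDistribution p) (x : Set.Ico (0 : ℝ) 1) :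
    ∃ j, 1 ≤ j ∧ ∃ y : Set.Ico (0 : ℝ) 1, (x : ℝ) = ifsMap p j y := by
  obtain ⟨j, hj, hjx, hxj⟩ := exists_phat_le_lt hP.hasSum x.2.1 x.2.2
  have hpj := hP.pos j hj
  refine ⟨j, hj, ⟨(x - phat p j) / p j, div_nonneg (by linarith) hpj.le, ?_⟩, ?_⟩
  · rw [div_lt_one hpj]
    linarith [phat_succ (p := p) hj]
  · simp only [ifsMap]
    field_simp
    ring

/-- Every `x ∈ [0, 1)` is coded by its greedy digits: iterate `x ↦ (x - p̂_j) / p_j`, where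
`j` is the digit of `x`, and use that `piP` and `x` agree up to a factor `∏_{m<n} p_{i_m} → 0`. -/
lemma Ico_subset_image_piP (hP : IsPNatDistribution p) :
    Set.Ico 0 1 ⊆ piP p '' {i | ∀ k, 1 ≤ i k} := by
  choose digit hdigit T hT using exists_ifsMap_eq hP
  intro x hx
  set orbit : ℕ → Set.Ico (0 : ℝ) 1 := fun n => T^[n] ⟨x, hx⟩
  set i : ℕ → ℕ := fun n => digit (orbit n)
  have hi (k : ℕ) : 1 ≤ i k := hdigit _
  have hx_eq (n : ℕ) : x = ifsComp p i n (orbit n) := by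
    induction n with
    | zero => rfl
    | succ n ih =>
      rw [ih, hT (orbit n)]
      simp only [ifsComp, Function.comp_apply, orbit, Function.iterate_succ_apply']
      rfl
  have hdist (n : ℕ) : |piP p i - x| ≤ ∏ m ∈ range n, p (i m) := by
    have hpiP := piP_mem_Ico hP fun k => hi (k + n)
    have horbit := (orbit n).2
    rw [piP_eq_ifsComp hP hi n, hx_eq n, ifsComp_eq_mul_add,
      ifsComp_eq_mul_add i n (orbit n), add_sub_add_right_eq_sub, ← mul_sub, abs_mul,
      abs_of_nonneg (prod_digits_nonneg hP.pos hi n)]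
    refine mul_le_of_le_one_right (prod_digits_nonneg hP.pos hi n) ?_
    rw [abs_le]
    constructor <;> linarith [hpiP.1, hpiP.2, horbit.1, horbit.2]
  have := ge_of_tendsto' (tendsto_prod_range_zero hP hi) hdist
  exact ⟨i, hi, sub_eq_zero.1 (abs_nonpos_iff.1 this)⟩

lemma image_piP (hP : IsPNatDistribution p) :
    piP p '' {i | ∀ k, 1 ≤ i k} = Set.Ico 0 1 :=
  Set.Subset.antisymm (Set.image_subset_iff.2 fun _ hi => piP_mem_Ico hP hi)
    (Ico_subset_image_piP hP)

lemma image_piP_cylinder (hP : IsPNatDistribution p) {n : ℕ} {c : ℕ → ℕ}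
    (hc : ∀ k, k < n → 1 ≤ c k) :
    piP p '' {i : ℕ → ℕ | (∀ k, 1 ≤ i k) ∧ ∀ k, k < n → i k = c k} =
      ifsComp p c n '' Set.Ico 0 1 := by
  rw [← image_piP hP, Set.image_image]
  ext y
  constructor
  · rintro ⟨i, ⟨hi, hic⟩, rfl⟩
    refine ⟨fun k => i (k + n), fun k => hi _, ?_⟩
    rw [piP_eq_ifsComp hP hi n, ifsComp_congr hic]
  · rintro ⟨j, hj, rfl⟩
    set i : ℕ → ℕ := fun k => if k < n then c k else j (k - n)
    have hi (k : ℕ) : 1 ≤ i k := by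
      by_cases hk : k < n
      · simpa [i, hk] using hc k hk
      · simpa [i, hk] using hj (k - n)
    have hic (k : ℕ) (hk : k < n) : i k = c k := if_pos hk
    refine ⟨i, ⟨hi, hic⟩, ?_⟩
    rw [piP_eq_ifsComp hP hi n, ifsComp_congr hic]
    congr 2
    funext k
    simp [i]

lemma piP_cylLow (hP : IsPNatDistribution p) {n : ℕ} {c : ℕ → ℕ} (hc : ∀ k, k < n → 1 ≤ c k) :
    piP p (cylLow c n) = ifsComp p c n 0 := by
  have hlow (k : ℕ) : 1 ≤ cylLow c n k := by
    unfold cylLow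
    split_ifs with hk
    exacts [hc k hk, le_rfl]
  have htail : (fun k => cylLow c n (k + n)) = fun _ => 1 := funext fun k => if_neg (by omega)
  rw [piP_eq_ifsComp hP hlow n, ifsComp_congr (c := cylLow c n) fun k hk => if_pos hk, htail,
    piP_eq_phat_of_forall_succ_eq_one fun _ => rfl, phat_one]

lemma piP_cylHigh (hP : IsPNatDistribution p) {n : ℕ} (hn : 1 ≤ n) {c : ℕ → ℕ}
    (hc : ∀ k, k < n → 1 ≤ c k) :
    piP p (cylHigh c n) = ifsComp p c n 1 := by
  obtain ⟨n, rfl⟩ := Nat.exists_eq_add_of_le' hn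
  have hhigh (k : ℕ) : 1 ≤ cylHigh c (n + 1) k := by
    unfold cylHigh
    split_ifs with hk hk'
    exacts [hc k (by omega), by omega, le_rfl]
  have htail (k : ℕ) : cylHigh c (n + 1) (k + 1 + n) = 1 := by simp [cylHigh]
  rw [piP_eq_ifsComp hP hhigh n,
    ifsComp_congr (c := cylHigh c (n + 1)) fun k hk => if_pos (by omega),
    piP_eq_phat_of_forall_succ_eq_one htail]
  simp [cylHigh, ifsComp, ifsMap, phat_succ (hc n n.lt_succ_self)]

end

/-- The cylinder `Λ^π_{c_1 … c_n}` is exactly the half-open interval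
`[π_P(c_1,…,c_n,1,1,…), π_P(c_1,…,c_n+1,1,1,…))`, and its Lebesgue measure
equals `p_{c_1} ⋯ p_{c_n}`. -/
theorem stmt2 (p : ℕ → ℝ) (hp : ∀ j, 1 ≤ j → 0 < p j ∧ p j < 1)
    (hpsum : ∑' j : ℕ, p (j + 1) = 1)
    (n : ℕ) (hn : 1 ≤ n) (c : ℕ → ℕ) (hc : ∀ k, k < n → 1 ≤ c k) :
    piP p '' {i : ℕ → ℕ | (∀ k, 1 ≤ i k) ∧ ∀ k, k < n → i k = c k} =
      Set.Ico (piP p (cylLow c n)) (piP p (cylHigh c n)) ∧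
    volume (piP p '' {i : ℕ → ℕ | (∀ k, 1 ≤ i k) ∧ ∀ k, k < n → i k = c k}) =
      ENNReal.ofReal (∏ m ∈ Finset.range n, p (c m)) := by
  have hP : IsPNatDistribution p := by
    refine ⟨fun j hj => (hp j hj).1, hpsum ▸ Summable.hasSum ?_⟩
    by_contra h
    simp [tsum_eq_zero_of_not_summable h] at hpsum
  have hprod : 0 < ∏ m ∈ range n, p (c m) :=
    prod_pos fun m hm => hP.pos _ (hc m (mem_range.1 hm))
  have hcyl : piP p '' {i : ℕ → ℕ | (∀ k, 1 ≤ i k) ∧ ∀ k, k < n → i k = c k} =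
      Set.Ico (piP p (cylLow c n)) (piP p (cylHigh c n)) := by
    rw [image_piP_cylinder hP hc, ifsComp_image_Ico hprod, piP_cylLow hP hc,
      piP_cylHigh hP hn hc]
  refine ⟨hcyl, ?_⟩
  rw [hcyl, Real.volume_Ico, piP_cylLow hP hc, piP_cylHigh hP hn hc,
    ifsComp_eq_mul_add c n 1, mul_one, add_sub_cancel_right]
end

section
/- The function M_π satisfies the system of functional equations M_π(σ^{n−1}(x)) = 2^{1−i_n} · (1 − M_π(σ^n(x))/2) for every x = π_P(i_1, i_2, …) in [0,1) and every n ≥ 1; equivalently, h = M_π/2 satisfies h(σ^{n−1}(x)) = 2^{−i_n}(1 − h(σ^n(x))). -/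
open scoped BigOperators
open MeasureTheory

/-!
Shifting the digit sequence once splits off the first term `2^{1-i_1}` of the alternating
series defining `M_π`, and every later term becomes `-2^{-i_1}` times the corresponding term
of the series for the shifted sequence. Hence `M_π(x) = 2^{1-i_1}(1 - M_π(σ x)/2)`, and the
general equation follows by applying this to `σ^{n-1} x`, whose digits are `i_n, i_{n+1}, …`.
-/

lemma summable_Mseq (i : ℕ → ℕ) (hi : ∀ k, 1 ≤ i k) :
    Summable (fun k : ℕ =>
      (-1 : ℝ) ^ k * (2 : ℝ) ^ ((1 : ℤ) - ∑ m ∈ Finset.range (k + 1), (i m : ℤ))) := by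
  refine Summable.of_norm_bounded (g := fun k : ℕ => (1 / 2 : ℝ) ^ k)
    (summable_geometric_of_lt_one (by norm_num) (by norm_num)) fun k => ?_
  have hsum : (k : ℤ) + 1 ≤ ∑ m ∈ Finset.range (k + 1), (i m : ℤ) := by
    calc (k : ℤ) + 1 = ∑ m ∈ Finset.range (k + 1), (1 : ℤ) := by simp
      _ ≤ ∑ m ∈ Finset.range (k + 1), (i m : ℤ) :=
          Finset.sum_le_sum fun m _ => by exact_mod_cast hi m
  rw [norm_mul, norm_pow, norm_neg, norm_one, one_pow, one_mul,
    Real.norm_of_nonneg (zpow_nonneg (by norm_num) _)]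
  calc (2 : ℝ) ^ ((1 : ℤ) - ∑ m ∈ Finset.range (k + 1), (i m : ℤ))
      ≤ (2 : ℝ) ^ (-(k : ℤ)) := zpow_le_zpow_right₀ (by norm_num) (by linarith)
    _ = (1 / 2 : ℝ) ^ k := by rw [zpow_neg, zpow_natCast, one_div, inv_pow]

lemma Mseq_term_succ (i : ℕ → ℕ) (k : ℕ) :
    (-1 : ℝ) ^ (k + 1) * (2 : ℝ) ^ ((1 : ℤ) - ∑ m ∈ Finset.range (k + 1 + 1), (i m : ℤ)) =
      -(2 : ℝ) ^ (-(i 0 : ℤ)) *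
        ((-1 : ℝ) ^ k * (2 : ℝ) ^ ((1 : ℤ) - ∑ m ∈ Finset.range (k + 1), (i (m + 1) : ℤ))) := by
  rw [Finset.sum_range_succ' (fun m => (i m : ℤ)),
    show (1 : ℤ) - (∑ m ∈ Finset.range (k + 1), (i (m + 1) : ℤ) + i 0) =
      -(i 0 : ℤ) + (1 - ∑ m ∈ Finset.range (k + 1), (i (m + 1) : ℤ)) by ring,
    zpow_add₀ two_ne_zero]
  ring

lemma Mseq_eq_zpow_mul_one_sub_Mseq_tail (i : ℕ → ℕ) (hi : ∀ k, 1 ≤ i k) :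
    Mseq i = (2 : ℝ) ^ ((1 : ℤ) - (i 0 : ℤ)) * (1 - Mseq (fun k => i (k + 1)) / 2) := by
  rw [Mseq, (summable_Mseq i hi).tsum_eq_zero_add]
  simp only [Mseq_term_succ, tsum_mul_left]
  rw [← Mseq, zero_add, Finset.sum_range_one, sub_eq_neg_add, zpow_add_one₀ two_ne_zero]
  ring

lemma iterate_apply_of_shift (f : (ℕ → ℕ) → ℝ) (σ : ℝ → ℝ)
    (hσ : ∀ i : ℕ → ℕ, (∀ k, 1 ≤ i k) → σ (f i) = f (fun k => i (k + 1)))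
    (i : ℕ → ℕ) (hi : ∀ k, 1 ≤ i k) (m : ℕ) :
    σ^[m] (f i) = f (fun k => i (k + m)) := by
  induction m with
  | zero => rfl
  | succ m ih =>
    rw [Function.iterate_succ_apply', ih, hσ _ fun k => hi _]
    simp only [add_assoc, add_comm 1 m]

theorem stmt6_general (p : ℕ → ℝ)
    (σ M : ℝ → ℝ)
    (hσ : ∀ i : ℕ → ℕ, (∀ k, 1 ≤ i k) → σ (piP p i) = piP p (fun k => i (k + 1)))
    (hM : ∀ i : ℕ → ℕ, (∀ k, 1 ≤ i k) → M (piP p i) = Mseq i)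
    (i : ℕ → ℕ) (hi : ∀ k, 1 ≤ i k) (n : ℕ) (hn : 1 ≤ n) :
    M (σ^[n - 1] (piP p i)) =
      (2 : ℝ) ^ ((1 : ℤ) - (i (n - 1) : ℤ)) * (1 - M (σ^[n] (piP p i)) / 2) := by
  obtain ⟨m, rfl⟩ : ∃ m, n = m + 1 := ⟨n - 1, by omega⟩
  rw [Nat.add_sub_cancel, iterate_apply_of_shift _ σ hσ i hi, iterate_apply_of_shift _ σ hσ i hi,
    hM _ fun k => hi _, hM _ fun k => hi _,
    Mseq_eq_zpow_mul_one_sub_Mseq_tail _ fun k => hi _]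
  simp only [zero_add, add_assoc, add_comm 1 m]

/-- The Minkowski type function satisfies the system of functional equations
`M_π(σ^{n−1}(x)) = 2^{1−i_n} (1 − M_π(σ^n(x))/2)` for every `x = π_P(i_1, i_2, …)`
and every `n ≥ 1`. -/
theorem stmt6 (p : ℕ → ℝ) (hp : ∀ j, 1 ≤ j → 0 < p j ∧ p j < 1)
    (hpsum : ∑' j : ℕ, p (j + 1) = 1)
    (σ M : ℝ → ℝ)
    (hσ : ∀ i : ℕ → ℕ, (∀ k, 1 ≤ i k) → σ (piP p i) = piP p (fun k => i (k + 1)))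
    (hM : ∀ i : ℕ → ℕ, (∀ k, 1 ≤ i k) → M (piP p i) = Mseq i)
    (i : ℕ → ℕ) (hi : ∀ k, 1 ≤ i k) (n : ℕ) (hn : 1 ≤ n) :
    M (σ^[n - 1] (piP p i)) =
      (2 : ℝ) ^ ((1 : ℤ) - (i (n - 1) : ℤ)) * (1 - M (σ^[n] (piP p i)) / 2) :=
  stmt6_general p σ M hσ hM i hi n hn
end
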